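/- For every n ≥ 1: 𝒱ₙ ⊆ 𝒜ₙ and ℰₙ ⊆ ℬₙ, i.e., every pointed frame in 𝒱ₙ belongs to the class 𝒜ₙ and every pointed frame in ℰₙ belongs to its complement ℬₙ. -/

import Mathlib

universe u v

/-- A Kripke model for a set `Φ` of proposition symbols: a set of worlds `W`,
an accessibility relation `R` and a valuation `V`. -/
structure KripkeModel (Φ : Type) : Type (u + 1) where
  W : Type u
  R : W → W → Prop
  V : Φ → W → Prop

/-- A pointed Kripke model: a Kripke model together with a distinguished world. -/
structure PointedModel (Φ : Type) : Type (u + 1) where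
  M : KripkeModel.{u} Φ
  w : M.W

/-- `n`-bisimilarity of pointed models: there are relations `Zₙ ⊆ … ⊆ Z₀` such that the
distinguished pair is in `Zₙ`, `Z₀` relates only propositionally equivalent points, and the
back-and-forth conditions hold for each `0 ≤ i ≤ n-1`. -/
def NBisim {Φ : Type} (n : ℕ) (M : KripkeModel.{u} Φ) (w : M.W)
    (N : KripkeModel.{v} Φ) (x : N.W) : Prop :=
  ∃ Z : ℕ → M.W → N.W → Prop,
    (∀ i, i < n → ∀ a b, Z (i + 1) a b → Z i a b) ∧
    Z n w x ∧
    (∀ a b, Z 0 a b → ∀ p, M.V p a ↔ N.V p b) ∧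
    (∀ i, i < n → ∀ a b, Z (i + 1) a b → ∀ c, M.R a c → ∃ d, N.R b d ∧ Z i c d) ∧
    (∀ i, i < n → ∀ a b, Z (i + 1) a b → ∀ d, N.R b d → ∃ c, M.R a c ∧ Z i c d)

/-- The class `𝒜ₙ` of all pointed frames `(A, w)` such that any two `R`-successors of `w`
are `n`-bisimilar.  Its complement is the class `ℬₙ`. -/
def classA (n : ℕ) : Set (PointedModel.{u} Empty) :=
  {P | ∀ a b : P.M.W, P.M.R P.w a → P.M.R P.w b → NBisim n P.M a P.M b}

/-- The finite levels of the cumulative hierarchy: `V₀ = ∅`, `V_{k+1} = 𝒫(V_k)`. -/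
def Vlev : ℕ → ZFSet
  | 0 => ∅
  | n + 1 => ZFSet.powerset (Vlev n)

/-- The converse-membership accessibility relation on sets: `a R b` iff `b ∈ a`. -/
def zmem (a b : ZFSet) : Prop := b ∈ a

/-- `M_a`: the subframe of the frame `(V, ∋)` generated by the point `a`; its domain
consists of all points reachable from `a` by iterated membership. -/
def Ma (a : ZFSet) : KripkeModel.{1} Empty where
  W := {x : ZFSet // Relation.ReflTransGen zmem a x}
  R := fun x y => zmem x.1 y.1
  V := fun p _ => p.elim

/-- The pointed frame `(M_a, a)`. -/
def Mpt (a : ZFSet) : PointedModel.{1} Empty :=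
  ⟨Ma a, ⟨a, Relation.ReflTransGen.refl⟩⟩

/-- `⋁A`: the pointed frame obtained from a set `A` of pointed frames by adding a new
point (the new distinguished point) with `R`-edges to the distinguished point of each
member of `A`, keeping all original edges. -/
def vee (A : Set (PointedModel.{u} Empty)) : PointedModel.{u + 1} Empty where
  M :=
    { W := Option ((Q : {P : PointedModel.{u} Empty // P ∈ A}) × Q.1.M.W)
      R := fun x y =>
        (∃ Q : {P : PointedModel.{u} Empty // P ∈ A}, x = none ∧ y = some ⟨Q, Q.1.w⟩) ∨
        (∃ (Q : {P : PointedModel.{u} Empty // P ∈ A}) (a b : Q.1.M.W),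
          Q.1.M.R a b ∧ x = some ⟨Q, a⟩ ∧ y = some ⟨Q, b⟩)
      V := fun p _ => p.elim }
  w := none

/-- `𝒱ₙ = { ⋁{(M_a, a)} : a ∈ V_{n+1} }`. -/
def calV (n : ℕ) : Set (PointedModel.{2} Empty) :=
  {P | ∃ a, a ∈ Vlev (n + 1) ∧ P = vee {Mpt a}}

/-- `ℰₙ = { ⋁{(M_a, a), (M_b, b)} : a, b ∈ V_{n+1}, a ≠ b }`. -/
def calE (n : ℕ) : Set (PointedModel.{2} Empty) :=
  {P | ∃ a b, a ∈ Vlev (n + 1) ∧ b ∈ Vlev (n + 1) ∧ a ≠ b ∧ P = vee {Mpt a, Mpt b}}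

/-!
The root of `⋁{(M_a, a)}` has a single successor, so `𝒱ₙ ⊆ 𝒜ₙ` by reflexivity of `≈ₙ`.
In `⋁{(M_a, a), (M_b, b)}` each summand sits as a generated subframe (the inclusion is a
bounded morphism), so if the two successors of the root were `n`-bisimilar then so would be
`(M_a, a)` and `(M_b, b)`. For sets of rank at most `n + 1` this forces `a = b`: by induction
on `i`, the back-and-forth conditions match the elements of two `i`-bisimilar sets of rank
`≤ i + 1` with `(i - 1)`-bisimilar, hence equal, elements.
-/

universe w₁ w₂

namespace KripkeModel

variable {Φ : Type}

structure IsBoundedMorphism {M : KripkeModel.{u} Φ} {N : KripkeModel.{v} Φ}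
    (f : M.W → N.W) : Prop where
  val_iff : ∀ p x, M.V p x ↔ N.V p (f x)
  map_rel : ∀ x y, M.R x y → N.R (f x) (f y)
  exists_of_rel : ∀ x z, N.R (f x) z → ∃ y, M.R x y ∧ f y = z

end KripkeModel

open KripkeModel

namespace NBisim

variable {Φ : Type} {n : ℕ}

theorem refl (n : ℕ) (M : KripkeModel.{u} Φ) (x : M.W) : NBisim n M x M x :=
  ⟨fun _ => Eq, fun _ _ _ _ h => h, rfl, by rintro a _ rfl p; rfl,
    by rintro _ _ a _ rfl c hc; exact ⟨c, hc, rfl⟩,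
    by rintro _ _ a _ rfl d hd; exact ⟨d, hd, rfl⟩⟩

theorem symm {M : KripkeModel.{u} Φ} {N : KripkeModel.{v} Φ} {x : M.W} {y : N.W}
    (h : NBisim n M x N y) : NBisim n N y M x := by
  obtain ⟨Z, hmono, hxy, hval, hforth, hback⟩ := h
  exact ⟨fun i b a => Z i a b, fun i hi b a => hmono i hi a b, hxy,
    fun b a hab p => (hval a b hab p).symm,
    fun i hi b a hab => hback i hi a b hab, fun i hi b a hab => hforth i hi a b hab⟩

theorem of_isBoundedMorphism_left {M : KripkeModel.{u} Φ} {N : KripkeModel.{v} Φ}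
    {K : KripkeModel.{w₁} Φ} {f : M.W → N.W} (hf : IsBoundedMorphism f) {x : M.W} {y : K.W}
    (h : NBisim n N (f x) K y) : NBisim n M x K y := by
  obtain ⟨Z, hmono, hxy, hval, hforth, hback⟩ := h
  refine ⟨fun i a b => Z i (f a) b, fun i hi a b => hmono i hi (f a) b, hxy,
    fun a b hab p => (hf.val_iff p a).trans (hval _ b hab p), ?_, ?_⟩
  · intro i hi a b hab c hac
    exact hforth i hi _ b hab _ (hf.map_rel a c hac)
  · intro i hi a b hab d hbd
    obtain ⟨c', hac', hc'd⟩ := hback i hi _ b hab d hbd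
    obtain ⟨c, hac, rfl⟩ := hf.exists_of_rel a c' hac'
    exact ⟨c, hac, hc'd⟩

theorem of_isBoundedMorphism {M : KripkeModel.{u} Φ} {N : KripkeModel.{v} Φ}
    {M' : KripkeModel.{w₁} Φ} {N' : KripkeModel.{w₂} Φ} {f : M.W → N.W} {g : M'.W → N'.W}
    (hf : IsBoundedMorphism f) (hg : IsBoundedMorphism g) {x : M.W} {y : M'.W}
    (h : NBisim n N (f x) N' (g y)) : NBisim n M x M' y :=
  (of_isBoundedMorphism_left hg (of_isBoundedMorphism_left hf h).symm).symm

theorem exists_forth {M : KripkeModel.{u} Φ} {N : KripkeModel.{v} Φ} {x : M.W} {y : N.W}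
    (h : NBisim (n + 1) M x N y) {x' : M.W} (hx' : M.R x x') :
    ∃ y', N.R y y' ∧ NBisim n M x' N y' := by
  obtain ⟨Z, hmono, hxy, hval, hforth, hback⟩ := h
  obtain ⟨y', hyy', hZ⟩ := hforth n n.lt_succ_self x y hxy x' hx'
  exact ⟨y', hyy', Z, fun i hi => hmono i (by omega), hZ, hval,
    fun i hi => hforth i (by omega), fun i hi => hback i (by omega)⟩

theorem exists_back {M : KripkeModel.{u} Φ} {N : KripkeModel.{v} Φ} {x : M.W} {y : N.W}
    (h : NBisim (n + 1) M x N y) {y' : N.W} (hy' : N.R y y') :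
    ∃ x', M.R x x' ∧ NBisim n M x' N y' := by
  obtain ⟨x', hxx', h'⟩ := h.symm.exists_forth hy'
  exact ⟨x', hxx', h'.symm⟩

end NBisim

def veeIncl (A : Set (PointedModel.{u} Empty)) (Q : {P : PointedModel.{u} Empty // P ∈ A}) :
    Q.1.M.W → (vee A).M.W :=
  fun x => some ⟨Q, x⟩

theorem isBoundedMorphism_veeIncl (A : Set (PointedModel.{u} Empty))
    (Q : {P : PointedModel.{u} Empty // P ∈ A}) : IsBoundedMorphism (veeIncl A Q) where
  val_iff p := p.elim
  map_rel x y hxy := Or.inr ⟨Q, x, y, hxy, rfl, rfl⟩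
  exists_of_rel := by
    rintro x z (⟨Q', h, -⟩ | ⟨Q', x', y, hxy, h, rfl⟩)
    · cases h
    · cases h
      exact ⟨y, hxy, rfl⟩

theorem vee_rel_root_iff {A : Set (PointedModel.{u} Empty)} {y : (vee A).M.W} :
    (vee A).M.R (vee A).w y ↔ ∃ Q, y = veeIncl A Q Q.1.w := by
  constructor
  · rintro (⟨Q, -, rfl⟩ | ⟨Q, a, b, -, h, -⟩)
    · exact ⟨Q, rfl⟩
    · cases h
  · rintro ⟨Q, rfl⟩
    exact Or.inl ⟨Q, rfl, rfl⟩

theorem eq_of_nbisim_of_mem_Vlev {a b : ZFSet} :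
    ∀ (i : ℕ) (x : (Ma a).W) (y : (Ma b).W), x.1 ∈ Vlev (i + 1) → y.1 ∈ Vlev (i + 1) →
      NBisim i (Ma a) x (Ma b) y → x.1 = y.1
  | 0, x, y, hx, hy, _ => by
    have hx : x.1 ⊆ ∅ := ZFSet.mem_powerset.mp hx
    have hy : y.1 ⊆ ∅ := ZFSet.mem_powerset.mp hy
    ext c
    exact ⟨fun hc => absurd (hx hc) (ZFSet.notMem_empty c),
      fun hc => absurd (hy hc) (ZFSet.notMem_empty c)⟩
  | i + 1, x, y, hx, hy, h => by
    have hx : x.1 ⊆ Vlev (i + 1) := ZFSet.mem_powerset.mp hx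
    have hy : y.1 ⊆ Vlev (i + 1) := ZFSet.mem_powerset.mp hy
    ext c
    constructor
    · intro hc
      obtain ⟨y', hyy', h'⟩ := h.exists_forth (x' := ⟨c, x.2.tail hc⟩) hc
      have hcy : c = y'.1 := eq_of_nbisim_of_mem_Vlev i _ y' (hx hc) (hy hyy') h'
      exact hcy ▸ hyy'
    · intro hc
      obtain ⟨x', hxx', h'⟩ := h.exists_back (y' := ⟨c, y.2.tail hc⟩) hc
      have hxc : x'.1 = c := eq_of_nbisim_of_mem_Vlev i x' _ (hx hxx') (hy hc) h'
      exact hxc ▸ hxx'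

theorem calV_subset_classA_and_calE_subset_compl_general (n : ℕ) :
    calV n ⊆ classA.{2} n ∧ calE n ⊆ (classA.{2} n)ᶜ := by
  constructor
  · rintro P ⟨a, -, rfl⟩ x y hx hy
    obtain ⟨Q, rfl⟩ := vee_rel_root_iff.mp hx
    obtain ⟨Q', rfl⟩ := vee_rel_root_iff.mp hy
    obtain rfl : Q = Q' := Subsingleton.elim Q Q'
    exact NBisim.refl n _ _
  · rintro P ⟨a, b, ha, hb, hne, rfl⟩ hP
    let Qa : {P // P ∈ ({Mpt a, Mpt b} : Set _)} := ⟨Mpt a, Or.inl rfl⟩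
    let Qb : {P // P ∈ ({Mpt a, Mpt b} : Set _)} := ⟨Mpt b, Or.inr rfl⟩
    have hab : NBisim n (Ma a) (Mpt a).w (Ma b) (Mpt b).w :=
      NBisim.of_isBoundedMorphism (isBoundedMorphism_veeIncl _ Qa)
        (isBoundedMorphism_veeIncl _ Qb)
        (hP _ _ (vee_rel_root_iff.mpr ⟨Qa, rfl⟩) (vee_rel_root_iff.mpr ⟨Qb, rfl⟩))
    exact hne (eq_of_nbisim_of_mem_Vlev n _ _ ha hb hab)

/-- `𝒱ₙ ⊆ 𝒜ₙ` and `ℰₙ ⊆ ℬₙ`. -/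
theorem calV_subset_classA_and_calE_subset_compl (n : ℕ) (hn : 1 ≤ n) :
    calV n ⊆ classA.{2} n ∧ calE n ⊆ (classA.{2} n)ᶜ :=
  calV_subset_classA_and_calE_subset_compl_general n
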